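/- arXiv:2005.02203 — 2 statements merged into one kernel-verified Lean document; each statement's English description precedes it below -/
import Mathlib

section
/- Let $r \geq 1$ and let $(a_j)_{j\in\mathbb{Z}}$ and $(c_j)_{j\in\mathbb{Z}}$ be sequences of complex numbers with all $c_j$ distinct and $a_j \neq c_k$ whenever needed for nonvanishing denominators. Define lower-triangular matrices $f_{nk} = \frac{\prod_{j=k}^{n-1}(a_j - c_k)}{\prod_{j=k+1}^{n}(c_j - c_k)}$ and $g_{kl} = \frac{(a_l - c_l)\prod_{j=l+1}^{k}(a_j - c_k)}{(a_k - c_k)\prod_{j=l}^{k-1}(c_j - c_k)}$ for integers $n \geq k \geq l$ (and $0$ otherwise). Then $f$ and $g$ are mutually inverse: $\sum_{l \leq k \leq n} f_{nk} g_{kl} = \delta_{nl}$ for all integers $n \geq l$. -/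
/-!
For `l < n`, after cancelling `a k - c k` the `(n, l)` entry of `f * g` is `a l - c l` times
`∑ k, P (c k) / ∏_{j ≠ k} (c j - c k)` over `l ≤ k ≤ n`, where `P x = ∏_{l < j < n} (a j - x)`.
By Lagrange interpolation at the `n - l + 1` distinct nodes, this sum is the coefficient of degree
`n - l` of `P` (up to sign), which vanishes because `P` has degree `n - l - 1`.
-/

open Finset

/-- Krattenthaler's matrix `f`. -/
noncomputable def fK (a c : ℤ → ℂ) (n k : ℤ) : ℂ :=
  (∏ j ∈ Finset.Ico k n, (a j - c k)) / (∏ j ∈ Finset.Icc (k + 1) n, (c j - c k))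

/-- Krattenthaler's matrix `g`. -/
noncomputable def gK (a c : ℤ → ℂ) (k l : ℤ) : ℂ :=
  ((a l - c l) * ∏ j ∈ Finset.Icc (l + 1) k, (a j - c k)) /
    ((a k - c k) * ∏ j ∈ Finset.Ico l k, (c j - c k))

open Polynomial in
theorem Lagrange.sum_eval_div_prod_sub_eq_zero {F ι : Type*} [Field F] [DecidableEq ι]
    {s : Finset ι} {v : ι → F} (hvs : Set.InjOn v s) {P : F[X]} (hP : P.degree < ↑(#s - 1)) :
    ∑ i ∈ s, P.eval (v i) / ∏ j ∈ s.erase i, (v i - v j) = 0 := by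
  rw [← coeff_eq_sum hvs (hP.trans_le (by exact_mod_cast Nat.sub_le _ _)),
    coeff_eq_zero_of_degree_lt hP]

section IntervalProducts

variable {α M : Type*} [LinearOrder α] [LocallyFiniteOrder α] [CommMonoid M] {l k n : α}

theorem Finset.prod_Ico_mul_prod_Ioc (x : α → M) (hlk : l ≤ k) (hkn : k ≤ n) (hln : l < n) :
    (∏ j ∈ Ico k n, x j) * ∏ j ∈ Ioc l k, x j = x k * ∏ j ∈ Ioo l n, x j := by
  rcases hkn.lt_or_eq with hkn | rfl
  · have hdisj : Disjoint (Ioo k n) (Ioc l k) := by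
      rw [disjoint_left]; intro j; simp only [mem_Ioo, mem_Ioc]; order
    have hunion : Ioo k n ∪ Ioc l k = Ioo l n := by
      ext j; simp only [mem_union, mem_Ioo, mem_Ioc]; grind
    rw [← Ioo_insert_left hkn, prod_insert (by simp), mul_assoc, ← prod_union hdisj, hunion]
  · rw [Ico_self, prod_empty, one_mul, ← Ioo_insert_right hln, prod_insert (by simp)]

theorem Finset.prod_Ioc_mul_prod_Ico (x : α → M) (hlk : l ≤ k) (hkn : k ≤ n) :
    (∏ j ∈ Ioc k n, x j) * ∏ j ∈ Ico l k, x j = ∏ j ∈ (Icc l n).erase k, x j := by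
  have hdisj : Disjoint (Ioc k n) (Ico l k) := by
    rw [disjoint_left]; intro j; simp only [mem_Ioc, mem_Ico]; order
  rw [← prod_union hdisj]
  congr 1
  ext j; simp only [mem_union, mem_Ioc, mem_Ico, mem_erase, mem_Icc]; grind

end IntervalProducts

theorem fK_mul_gK {a c : ℤ → ℂ} {l k n : ℤ} (hk : a k ≠ c k) (hlk : l ≤ k) (hkn : k ≤ n)
    (hln : l < n) :
    fK a c n k * gK a c k l =
      (a l - c l) * ((∏ j ∈ Ioo l n, (a j - c k)) / ∏ j ∈ (Icc l n).erase k, (c j - c k)) := by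
  rw [fK, gK, Icc_add_one_left_eq_Ioc, Icc_add_one_left_eq_Ioc, div_mul_div_comm,
    mul_left_comm (∏ j ∈ Ico k n, _), prod_Ico_mul_prod_Ioc _ hlk hkn hln,
    mul_left_comm (∏ j ∈ Ioc k n, _), prod_Ioc_mul_prod_Ico _ hlk hkn, mul_left_comm (a l - c l),
    mul_div_mul_left _ _ (sub_ne_zero.mpr hk), mul_div_assoc]

/-- Krattenthaler's matrix inversion. -/
theorem krattenthaler_inversion (a c : ℤ → ℂ)
    (hc : ∀ j k : ℤ, j ≠ k → c j ≠ c k)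
    (hac : ∀ k : ℤ, a k ≠ c k) :
    ∀ n l : ℤ, l ≤ n →
      ∑ k ∈ Finset.Icc l n, fK a c n k * gK a c k l = if n = l then 1 else 0 := by
  intro n l hln
  rcases hln.eq_or_lt with rfl | hln
  · simp [fK, gK, sub_ne_zero.mpr (hac l)]
  rw [if_neg hln.ne']
  have hinj : Set.InjOn (-c) (Icc l n) := fun j _ k _ h =>
    by_contra fun hjk => hc j k hjk (neg_inj.mp h)
  have hdeg : (Lagrange.nodal (Ioo l n) (-a)).degree < ↑(#(Icc l n) - 1) := by
    rw [Lagrange.degree_nodal, Int.card_Icc, Int.card_Ioo]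
    norm_cast
    omega
  -- Interpolating at the nodes `-c k` yields the denominators `c j - c k` with no sign change.
  have hsum : ∑ k ∈ Icc l n,
      (∏ j ∈ Ioo l n, (a j - c k)) / ∏ j ∈ (Icc l n).erase k, (c j - c k) = 0 := by
    simpa only [Lagrange.eval_nodal, Pi.neg_apply, neg_sub_neg] using
      Lagrange.sum_eval_div_prod_sub_eq_zero hinj hdeg
  rw [sum_congr rfl fun k hk => fK_mul_gK (hac k) (mem_Icc.mp hk).1 (mem_Icc.mp hk).2 hln,
    ← mul_sum, hsum, mul_zero]
end

section
/- Let $r \geq 1$, let $n_1, \dots, n_r$ be non-negative integers not all zero, set $N = n_1 + \cdots + n_r$, and let $a(1), \dots, a(N-1)$ and $c_j(k)$ ($1 \leq j \leq r$, $0 \leq k \leq n_j$) be nonzero complex numbers in generic position (so all denominators below are nonzero). With $\theta(x) = 1-x$, the following identity holds: $\sum_{k_1=0}^{n_1}\cdots\sum_{k_r=0}^{n_r} \frac{\prod_{t=1}^{N-1}\big[(1 - a(t)c_1(k_1)\cdots c_r(k_r))\prod_{j=1}^r(1 - a(t)/c_j(k_j))\big]}{\prod_{i=1}^r\prod_{t=0,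 t\neq k_i}^{n_i}\big[(1 - c_i(t)c_1(k_1)\cdots c_r(k_r))\prod_{j=1}^r(1 - c_i(t)/c_j(k_j))\big]} \cdot \prod_{1\leq i<j\leq r}\frac{1}{1 - c_i(k_i)/c_j(k_j)} \cdot \prod_{j=1}^r \frac{1}{c_j(k_j)^j} = 0$. -/
/-!
Write `F(x, k) = θ(x k₁⋯k_r) ∏ⱼ θ(x / kⱼ)` and, with `Sᵢ = {cᵢ(0), …, cᵢ(nᵢ)}` and `kⱼ` standing
for `cⱼ(kⱼ)`, read the summand as `∏ₜ F(a(t), k) / D(k) / V(k)` over `k ∈ ∏ Sᵢ`, where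
`D(k) = ∏ᵢ ∏_{x ∈ Sᵢ, x ≠ kᵢ} F(x, k)` and `V(k) = ∏_{i<j} θ(kᵢ / kⱼ) ∏ⱼ kⱼ^j`. The vanishing
holds for any finite generic sets `Sᵢ` and any multiset of `a`'s of size `∑ #Sᵢ - r - 1`, by
induction on that size.

Inductive step: as a function of `a(1)` the sum is `∑ₖ F(a(1), k) gₖ`, a polynomial of degree
`≤ r + 1`. At `a(1) = z ∈ Sᵢ` the terms with `kᵢ = z` vanish, and in the others `F(z, k)` cancels
against `D(k)`, leaving the sum for `Sᵢ \ {z}`, which vanishes by induction. So the polynomial has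
the `∑ #Sᵢ > r + 1` roots `⋃ Sᵢ` and is zero.

Base case: one `S_{i₀} = {u, v}` has two elements and all others one, so there are two terms.
Since `F(x, k) V(k) = θ(x k₁⋯k_r) det Vandermonde(x, k₁, …, k_r)`, exchanging `u` and `v` swaps two
rows of the Vandermonde matrix, and the two terms cancel.
-/

open Finset Polynomial Matrix Function

lemma Fin.prod_prod_Ioi_eq_prod_pow {M : Type*} [CommMonoid M] {n : ℕ} (f : Fin n → M) :
    ∏ i, ∏ j ∈ Ioi i, f j = ∏ j, f j ^ (j : ℕ) := by
  rw [prod_comm' (t' := univ) (s' := Iio) (by simp)]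
  simp

lemma Fin.cons_update_eq_comp_swap {α : Type*} {n : ℕ} (b : Fin n → α) (i : Fin n) (u v : α) :
    (Fin.cons v (update b i u) : Fin (n + 1) → α) =
      Fin.cons u (update b i v) ∘ Equiv.swap 0 i.succ := by
  ext j
  refine Fin.cases ?_ (fun j => ?_) j
  · simp
  · rcases eq_or_ne j i with rfl | hj
    · simp only [Function.comp_apply, Equiv.swap_apply_right, Fin.cons_zero, Fin.cons_succ,
        update_self]
    · simp [Equiv.swap_apply_of_ne_of_ne (Fin.succ_ne_zero j) (Fin.succ_injective _ |>.ne hj), hj]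

lemma Matrix.det_vandermonde_cons {R : Type*} [CommRing R] {n : ℕ} (x : R) (v : Fin n → R) :
    (vandermonde (Fin.cons x v : Fin (n + 1) → R)).det =
      (∏ j, (v j - x)) * (vandermonde v).det := by
  rw [det_vandermonde, det_vandermonde, Fin.prod_univ_succ, Fin.prod_Ioi_zero]
  simp [Fin.prod_Ioi_succ]

lemma Matrix.det_vandermonde_cons_update {R : Type*} [CommRing R] {n : ℕ} (b : Fin n → R)
    (i : Fin n) (u v : R) :
    (vandermonde (Fin.cons v (update b i u))).det =
      -(vandermonde (Fin.cons u (update b i v))).det := by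
  rw [Fin.cons_update_eq_comp_swap, show vandermonde (Fin.cons u (update b i v) ∘
    Equiv.swap 0 i.succ) = (vandermonde _).submatrix (Equiv.swap 0 i.succ) id from rfl,
    det_permute, Equiv.Perm.sign_swap (Fin.succ_ne_zero i).symm]
  simp

section FinsetFamily

variable {ι α : Type*} [Fintype ι] [DecidableEq ι] {S : ι → Finset α}

lemma Finset.exists_eq_pair_of_sum_card_eq [DecidableEq α] (hne : ∀ i, (S i).Nonempty)
    (hcard : ∑ i, #(S i) = Fintype.card ι + 1) :
    ∃ i₀ u v, ∃ b : ι → α, u ≠ v ∧ S i₀ = {u, v} ∧ ∀ j ≠ i₀, S j = {b j} := by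
  have hpos : ∀ i, 1 ≤ #(S i) := fun i => (hne i).card_pos
  obtain ⟨i₀, hi₀⟩ : ∃ i₀, 2 ≤ #(S i₀) := by
    by_contra! h
    have : ∑ i, #(S i) ≤ ∑ _i : ι, 1 := sum_le_sum fun i _ => Nat.lt_succ_iff.mp (h i)
    simp only [sum_const, card_univ, smul_eq_mul, mul_one] at this
    omega
  have hsplit := add_sum_erase univ (fun i => #(S i)) (mem_univ i₀)
  have hones : ∑ _i ∈ univ.erase i₀, 1 = Fintype.card ι - 1 := by simp
  have hrest := sum_le_sum fun i (_ : i ∈ univ.erase i₀) => hpos i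
  have hsingle := (sum_eq_sum_iff_of_le fun i (_ : i ∈ univ.erase i₀) => hpos i).mp (by omega)
  obtain ⟨u, v, huv, hi₀⟩ := card_eq_two.mp (show #(S i₀) = 2 by omega)
  choose b hb using hne
  refine ⟨i₀, u, v, b, huv, hi₀, fun j hj => eq_singleton_iff_unique_mem.mpr ⟨hb j, ?_⟩⟩
  have hj : #(S j) = 1 := (hsingle j (mem_erase.mpr ⟨hj, mem_univ j⟩)).symm
  exact fun x hx => card_le_one.mp hj.le x hx (b j) (hb j)

lemma Fintype.piFinset_eq_pair [DecidableEq α] {i₀ : ι} {u v : α} {b : ι → α}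
    (hi₀ : S i₀ = {u, v}) (hS : ∀ j ≠ i₀, S j = {b j}) :
    piFinset S = {update b i₀ u, update b i₀ v} := by
  ext k
  simp only [mem_piFinset, mem_insert, mem_singleton, eq_update_iff]
  constructor
  · intro hk
    have hrest : ∀ j ≠ i₀, k j = b j := fun j hj => by simpa [hS j hj] using hk j
    rw [← or_and_right]
    exact ⟨by simpa [hi₀] using hk i₀, hrest⟩
  · rintro (⟨hki, hrest⟩ | ⟨hki, hrest⟩) j <;> rcases eq_or_ne j i₀ with rfl | hj <;> simp [*]

lemma Finset.sum_card_update_erase [DecidableEq α] {i : ι} {z : α} (hz : z ∈ S i) :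
    ∑ j, #(update S i ((S i).erase z) j) + 1 = ∑ j, #(S j) := by
  simp only [Fintype.sum_eq_add_sum_compl i, update_self, card_erase_of_mem hz]
  rw [sum_congr rfl fun j hj => by rw [update_of_ne (by simpa using hj)]]
  have := card_pos.mpr ⟨z, hz⟩
  omega

end FinsetFamily

namespace ArVanishing

variable {K : Type*} [Field K] {r : ℕ}

def arFactor (x : K) (k : Fin r → K) : K :=
  (1 - x * ∏ j, k j) * ∏ j, (1 - x / k j)

def arVandermonde (k : Fin r → K) : K :=
  (∏ i, ∏ j ∈ Ioi i, (1 - k i / k j)) * ∏ j, k j ^ (j.val + 1)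

lemma arFactor_apply_self {k : Fin r → K} {i : Fin r} (hk : k i ≠ 0) : arFactor (k i) k = 0 :=
  mul_eq_zero_of_right _ (prod_eq_zero (mem_univ i) (by rw [div_self hk, sub_self]))

lemma arVandermonde_eq {k : Fin r → K} (hk : ∀ j, k j ≠ 0) :
    arVandermonde k = (vandermonde k).det * ∏ j, k j := by
  have hpow : ∏ j, k j ^ (j.val + 1) = (∏ i, ∏ j ∈ Ioi i, k j) * ∏ j, k j := by
    simp only [pow_succ, prod_mul_distrib, Fin.prod_prod_Ioi_eq_prod_pow]
  rw [arVandermonde, hpow, ← mul_assoc, ← prod_mul_distrib, det_vandermonde]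
  congr 1
  refine prod_congr rfl fun i _ => ?_
  rw [← prod_mul_distrib]
  exact prod_congr rfl fun j _ => by field_simp [hk j]

lemma arFactor_mul_arVandermonde (x : K) {k : Fin r → K} (hk : ∀ j, k j ≠ 0) :
    arFactor x k * arVandermonde k = (1 - x * ∏ j, k j) * (vandermonde (Fin.cons x k)).det := by
  have hlin : (∏ j, (1 - x / k j)) * ∏ j, k j = ∏ j, (k j - x) := by
    rw [← prod_mul_distrib]
    exact prod_congr rfl fun j _ => by field_simp [hk j]
  rw [arFactor, arVandermonde_eq hk, det_vandermonde_cons, ← hlin]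
  ring

lemma sum_arFactor_mul_eq_zero [DecidableEq K] {S : Fin r → Finset K}
    (hdisj : Pairwise (Disjoint on S)) (hcard : r + 1 < ∑ i, #(S i)) (g : (Fin r → K) → K)
    (hroot : ∀ i, ∀ z ∈ S i, ∑ k ∈ Fintype.piFinset S, arFactor z k * g k = 0) (x : K) :
    ∑ k ∈ Fintype.piFinset S, arFactor x k * g k = 0 := by
  have hlin : ∀ c : K, (1 - X * C c).natDegree ≤ 1 := fun c => by compute_degree
  set p : K[X] := ∑ k ∈ Fintype.piFinset S,
    (1 - X * C (∏ j, k j)) * (∏ j, (1 - X * C (k j)⁻¹)) * C (g k)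
  have heval : ∀ y, p.eval y = ∑ k ∈ Fintype.piFinset S, arFactor y k * g k := fun y => by
    simp only [p, eval_finsetSum, eval_mul, eval_prod, eval_sub, eval_one, eval_X, eval_C,
      arFactor, div_eq_mul_inv]
  have hdeg : p.natDegree ≤ r + 1 := by
    refine natDegree_sum_le_of_forall_le _ _ fun k _ => (natDegree_mul_C_le _ _).trans ?_
    refine natDegree_mul_le.trans ?_
    have := (natDegree_prod_le univ fun j => 1 - X * C (k j)⁻¹).trans
      (sum_le_sum fun j _ => hlin (k j)⁻¹)
    simp only [sum_const, card_univ, Fintype.card_fin, smul_eq_mul, mul_one] at this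
    have := hlin (∏ j, k j)
    omega
  have hp : p = 0 := by
    refine eq_zero_of_natDegree_lt_card_of_eval_eq_zero' p (univ.biUnion S) (fun z hz => ?_) ?_
    · obtain ⟨i, -, hz⟩ := mem_biUnion.mp hz
      rw [heval]
      exact hroot i z hz
    · rw [card_biUnion (hdisj.set_pairwise _)]
      omega
  rw [← heval, hp, eval_zero]

lemma injOn_of_one_sub_div_ne_zero {n : Fin r → ℕ} {c : Fin r → ℕ → K} (hc : ∀ j t, c j t ≠ 0)
    (hden : ∀ k : Fin r → ℕ, (∀ i, k i ≤ n i) → ∀ i : Fin r, ∀ t ≤ n i, t ≠ k i →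
      ∀ j, 1 - c i t / c j (k j) ≠ 0) (i : Fin r) :
    Set.InjOn (c i) (Iic (n i)) := by
  intro t ht s hs hts
  by_contra hne
  refine hden (update 0 i s) (update_le_iff.mpr ⟨mem_Iic.mp hs, fun _ _ => Nat.zero_le _⟩) i t
    (mem_Iic.mp ht) (by simpa using hne) i ?_
  rw [update_self, hts, div_self (hc i s), sub_self]

variable [DecidableEq K]

def arDenom (S : Fin r → Finset K) (k : Fin r → K) : K :=
  ∏ i, ∏ x ∈ (S i).erase (k i), arFactor x k

def arTerm (A : Multiset K) (S : Fin r → Finset K) (k : Fin r → K) : K :=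
  (A.map (arFactor · k)).prod / arDenom S k / arVandermonde k

lemma arTerm_cons (x : K) (A : Multiset K) (S : Fin r → Finset K) (k : Fin r → K) :
    arTerm (x ::ₘ A) S k = arFactor x k * arTerm A S k := by
  simp only [arTerm, Multiset.map_cons, Multiset.prod_cons, mul_div_assoc]

lemma arDenom_of_pair {S : Fin r → Finset K} {k : Fin r → K} {i₀ : Fin r} {u v : K}
    (huv : u ≠ v) (hi₀ : S i₀ = {u, v}) (hku : k i₀ = u) (hS : ∀ j ≠ i₀, S j = {k j}) :
    arDenom S k = arFactor v k := by
  rw [arDenom, Fintype.prod_eq_single i₀ fun j hj => by rw [hS j hj, erase_singleton, prod_empty],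
    hi₀, hku, erase_insert (by simpa using huv), prod_singleton]

lemma sum_arTerm_zero {S : Fin r → Finset K} (h0 : ∀ i, ∀ x ∈ S i, x ≠ 0)
    (hcard : ∑ i, #(S i) = r + 1) : ∑ k ∈ Fintype.piFinset S, arTerm 0 S k = 0 := by
  by_cases hne : ∀ i, (S i).Nonempty
  swap
  · obtain ⟨i, hi⟩ := not_forall.mp hne
    rw [Fintype.piFinset_eq_empty.mpr ⟨i, not_nonempty_iff_eq_empty.mp hi⟩, sum_empty]
  obtain ⟨i₀, u, v, b, huv, hi₀, hS⟩ :=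
    exists_eq_pair_of_sum_card_eq hne (by rwa [Fintype.card_fin])
  have hpi := Fintype.piFinset_eq_pair hi₀ hS
  have hk0 : ∀ x, update b i₀ x ∈ Fintype.piFinset S → ∀ j, update b i₀ x j ≠ 0 :=
    fun x hx j => h0 j _ (Fintype.mem_piFinset.mp hx j)
  have hprod : v * ∏ j, update b i₀ u j = u * ∏ j, update b i₀ v j := by
    simp only [prod_update_of_mem (mem_univ _)]
    ring
  rw [hpi, sum_pair fun h => huv (by simpa using congrFun h i₀)]
  simp only [arTerm, Multiset.map_zero, Multiset.prod_zero, div_div]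
  rw [arDenom_of_pair huv hi₀ (by simp) fun j hj => by simp [hS j hj, hj],
    arDenom_of_pair huv.symm (by rw [hi₀, pair_comm]) (by simp) fun j hj => by simp [hS j hj, hj],
    arFactor_mul_arVandermonde _ (hk0 u (by simp [hpi])),
    arFactor_mul_arVandermonde _ (hk0 v (by simp [hpi])),
    det_vandermonde_cons_update, hprod, mul_neg, div_neg, neg_add_cancel]

structure IsGeneric (S : Fin r → Finset K) : Prop where
  ne_zero : ∀ i, ∀ x ∈ S i, x ≠ 0
  disjoint : Pairwise (Disjoint on S)
  arFactor_ne_zero : ∀ k ∈ Fintype.piFinset S, ∀ i, ∀ x ∈ (S i).erase (k i), arFactor x k ≠ 0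

lemma IsGeneric.mono {S T : Fin r → Finset K} (hS : IsGeneric S) (hT : T ≤ S) : IsGeneric T where
  ne_zero i x hx := hS.ne_zero i x (hT i hx)
  disjoint i j hij := (hS.disjoint hij).mono (hT i) (hT j)
  arFactor_ne_zero k hk i x hx := hS.arFactor_ne_zero k (Fintype.piFinset_subset T S hT hk) i x
    (erase_subset_erase _ (hT i) hx)

lemma arDenom_eq_arFactor_mul {S : Fin r → Finset K} {k : Fin r → K} {i : Fin r} {z : K}
    (hz : z ∈ S i) (hk : k i ≠ z) :
    arDenom S k = arFactor z k * arDenom (update S i ((S i).erase z)) k := by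
  have hcompl : ∏ j ∈ {i}ᶜ, ∏ x ∈ (update S i ((S i).erase z) j).erase (k j), arFactor x k =
      ∏ j ∈ {i}ᶜ, ∏ x ∈ (S j).erase (k j), arFactor x k :=
    prod_congr rfl fun j hj => by rw [update_of_ne (by simpa using hj)]
  rw [arDenom, arDenom, Fintype.prod_eq_mul_prod_compl i, Fintype.prod_eq_mul_prod_compl i,
    update_self, hcompl, erase_right_comm, ← mul_prod_erase _ _ (mem_erase.mpr ⟨Ne.symm hk, hz⟩),
    mul_assoc]

lemma sum_arFactor_mul_arTerm {S : Fin r → Finset K} (hS : IsGeneric S) (A : Multiset K)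
    {i : Fin r} {z : K} (hz : z ∈ S i) :
    ∑ k ∈ Fintype.piFinset S, arFactor z k * arTerm A S k =
      ∑ k ∈ Fintype.piFinset (update S i ((S i).erase z)),
        arTerm A (update S i ((S i).erase z)) k := by
  rw [← sum_filter_add_sum_filter_not _ (fun k => k i = z)]
  have hvanish : ∑ k ∈ (Fintype.piFinset S).filter (fun k => k i = z),
      arFactor z k * arTerm A S k = 0 := sum_eq_zero fun k hk => by
    obtain ⟨hkS, rfl⟩ := mem_filter.mp hk
    rw [arFactor_apply_self (hS.ne_zero i _ (Fintype.mem_piFinset.mp hkS i)), zero_mul]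
  have hfilter : (Fintype.piFinset S).filter (fun k => ¬k i = z) =
      Fintype.piFinset (update S i ((S i).erase z)) := by
    rw [Fintype.piFinset_update_eq_filter_piFinset_mem _ _ (erase_subset z (S i))]
    exact filter_congr fun k hk => by simp [Fintype.mem_piFinset.mp hk i]
  rw [hvanish, zero_add, hfilter]
  refine sum_congr rfl fun k hk => ?_
  obtain ⟨hkS, hki⟩ := mem_filter.mp (hfilter ▸ hk)
  have hF := hS.arFactor_ne_zero k hkS i z (mem_erase.mpr ⟨Ne.symm hki, hz⟩)
  rw [arTerm, arTerm, arDenom_eq_arFactor_mul hz hki, mul_div_assoc', mul_div_assoc',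
    mul_div_mul_left _ _ hF]

theorem sum_arTerm_eq_zero (A : Multiset K) {S : Fin r → Finset K} (hS : IsGeneric S)
    (hcard : ∑ i, #(S i) = Multiset.card A + r + 1) :
    ∑ k ∈ Fintype.piFinset S, arTerm A S k = 0 := by
  induction A using Multiset.induction_on generalizing S with
  | empty => exact sum_arTerm_zero hS.ne_zero (by simpa using hcard)
  | cons x A ih =>
    rw [Multiset.card_cons] at hcard
    simp only [arTerm_cons]
    refine sum_arFactor_mul_eq_zero hS.disjoint (by omega) _ (fun i z hz => ?_) x
    rw [sum_arFactor_mul_arTerm hS A hz]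
    refine ih (hS.mono (update_le_self_iff.mpr (erase_subset z (S i)))) ?_
    have := sum_card_update_erase hz
    omega

lemma arDenom_image {ι : Type*} [DecidableEq ι] {I : Fin r → Finset ι} {c : Fin r → ι → K}
    (hc : ∀ i, Set.InjOn (c i) (I i)) {k : Fin r → ι} (hk : ∀ i, k i ∈ I i) :
    arDenom (fun i => (I i).image (c i)) (fun j => c j (k j)) =
      ∏ i, ∏ t ∈ (I i).erase (k i), arFactor (c i t) (fun j => c j (k j)) := by
  refine prod_congr rfl fun i _ => ?_
  have himage : ((I i).image (c i)).erase (c i (k i)) = ((I i).erase (k i)).image (c i) := by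
    ext x
    simp only [mem_erase, mem_image]
    constructor
    · rintro ⟨hx, t, ht, rfl⟩
      exact ⟨t, ⟨fun h => hx (h ▸ rfl), ht⟩, rfl⟩
    · rintro ⟨t, ⟨htk, ht⟩, rfl⟩
      exact ⟨fun h => htk (hc i ht (hk i) h), t, ht, rfl⟩
  rw [himage, prod_image fun t ht s hs => hc i (mem_of_mem_erase ht) (mem_of_mem_erase hs)]

section IndexedFamily

variable {n : Fin r → ℕ} {c : Fin r → ℕ → K}

lemma pairwise_disjoint_image_of_one_sub_div_ne_zero (hc : ∀ j t, c j t ≠ 0)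
    (hden : ∀ k : Fin r → ℕ, (∀ i, k i ≤ n i) → ∀ i j : Fin r, i < j →
      (1 - c i (k i) / c j (k j)) ≠ 0) :
    Pairwise (Disjoint on fun i => (Iic (n i)).image (c i)) := by
  have hlt : ∀ i j, i < j → Disjoint ((Iic (n i)).image (c i)) ((Iic (n j)).image (c j)) := by
    intro i j hij
    simp only [disjoint_left, mem_image, mem_Iic, not_exists, not_and]
    rintro _ ⟨t, ht, rfl⟩ s hs hst
    have hk : update (0 : Fin r → ℕ) i t ≤ n := update_le_iff.mpr ⟨ht, fun _ _ => Nat.zero_le _⟩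
    refine hden (update (update 0 i t) j s) (update_le_iff.mpr ⟨hs, fun l _ => hk l⟩) i j hij ?_
    rw [update_of_ne hij.ne, update_self, update_self, hst, div_self (hc i t), sub_self]
  intro i j hij
  rcases lt_or_gt_of_ne hij with h | h
  exacts [hlt i j h, (hlt j i h).symm]

lemma isGeneric_image (hc : ∀ j t, c j t ≠ 0)
    (hden1 : ∀ k : Fin r → ℕ, (∀ i, k i ≤ n i) → ∀ i : Fin r, ∀ t ≤ n i, t ≠ k i →
      (1 - c i t * ∏ j, c j (k j)) ≠ 0 ∧ ∀ j, (1 - c i t / c j (k j)) ≠ 0)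
    (hden2 : ∀ k : Fin r → ℕ, (∀ i, k i ≤ n i) → ∀ i j : Fin r, i < j →
      (1 - c i (k i) / c j (k j)) ≠ 0) :
    IsGeneric fun i => (Iic (n i)).image (c i) where
  ne_zero i x hx := by
    obtain ⟨t, -, rfl⟩ := mem_image.mp hx
    exact hc i t
  disjoint := pairwise_disjoint_image_of_one_sub_div_ne_zero hc hden2
  arFactor_ne_zero k hk i x hx := by
    rw [Fintype.piFinset_image] at hk
    obtain ⟨m, hm, rfl⟩ := mem_image.mp hk
    obtain ⟨hxm, hx⟩ := mem_erase.mp hx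
    obtain ⟨t, ht, rfl⟩ := mem_image.mp hx
    obtain ⟨h1, h2⟩ := hden1 m (fun j => mem_Iic.mp (Fintype.mem_piFinset.mp hm j)) i t
      (mem_Iic.mp ht) (fun h => hxm (h ▸ rfl))
    exact mul_ne_zero h1 (prod_ne_zero_iff.mpr fun j _ => h2 j)

end IndexedFamily

end ArVanishing

open ArVanishing in
theorem Ar_vanishing_trig_general (r : ℕ) (n : Fin r → ℕ)
    (hn : ∃ i, n i ≠ 0) (a : ℕ → ℂ) (c : Fin r → ℕ → ℂ)
    (hc : ∀ j t, c j t ≠ 0)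
    (hden1 : ∀ k : Fin r → ℕ, (∀ i, k i ≤ n i) → ∀ i : Fin r, ∀ t ≤ n i, t ≠ k i →
      (1 - c i t * ∏ j, c j (k j)) ≠ 0 ∧ ∀ j, (1 - c i t / c j (k j)) ≠ 0)
    (hden2 : ∀ k : Fin r → ℕ, (∀ i, k i ≤ n i) → ∀ i j : Fin r, i < j →
      (1 - c i (k i) / c j (k j)) ≠ 0) :
    ∑ k ∈ Fintype.piFinset (fun i => Finset.Iic (n i)),
      ((∏ t ∈ Finset.Icc 1 ((∑ i, n i) - 1),
          ((1 - a t * ∏ j, c j (k j)) * ∏ j, (1 - a t / c j (k j)))) /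
        (∏ i, ∏ t ∈ (Finset.Iic (n i)).erase (k i),
          ((1 - c i t * ∏ j, c j (k j)) * ∏ j, (1 - c i t / c j (k j)))) *
        (∏ i, ∏ j ∈ Finset.Ioi i, (1 - c i (k i) / c j (k j))⁻¹) *
        ∏ j, (c j (k j) ^ (j.val + 1))⁻¹) = 0 := by
  classical
  set A := (Icc 1 (∑ i, n i - 1)).val.map a
  set S : Fin r → Finset ℂ := fun i => (Iic (n i)).image (c i)
  have hinj := injOn_of_one_sub_div_ne_zero hc fun k hk i t ht htk => (hden1 k hk i t ht htk).2
  have hM : 1 ≤ ∑ i, n i := Nat.one_le_iff_ne_zero.mpr (by simpa [sum_eq_zero_iff] using hn)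
  have hcard : ∑ i, #(S i) = Multiset.card A + r + 1 := by
    simp only [S, A, card_image_of_injOn (hinj _), Nat.card_Iic, sum_add_distrib, sum_const,
      card_univ, Fintype.card_fin, smul_eq_mul, mul_one, Multiset.card_map, card_val, Nat.card_Icc,
      add_tsub_cancel_right]
    omega
  calc _ = ∑ k ∈ Fintype.piFinset (fun i => Iic (n i)), arTerm A S (fun j => c j (k j)) := by
        refine sum_congr rfl fun k hk => ?_
        rw [arTerm, arDenom_image hinj fun i => Fintype.mem_piFinset.mp hk i]
        simp only [A, Multiset.map_map, Function.comp_def, prod_map_val, arVandermonde, arFactor,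
          prod_inv_distrib, mul_inv, div_eq_mul_inv, mul_assoc]
    _ = ∑ k ∈ Fintype.piFinset S, arTerm A S k := by
        rw [Fintype.piFinset_image, sum_image fun k hk k' hk' h => funext fun j =>
          hinj j (Fintype.mem_piFinset.mp hk j) (Fintype.mem_piFinset.mp hk' j) (congrFun h j)]
    _ = 0 := sum_arTerm_eq_zero A (isGeneric_image hc hden1 hden2) hcard

/-- The trigonometric (p = 0) case of the key vanishing lemma behind the
elliptic `A_r` matrix inversion. -/
theorem Ar_vanishing_trig (r : ℕ) (hr : 1 ≤ r) (n : Fin r → ℕ)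
    (hn : ∃ i, n i ≠ 0) (a : ℕ → ℂ) (c : Fin r → ℕ → ℂ)
    (hc : ∀ j t, c j t ≠ 0)
    (hden1 : ∀ k : Fin r → ℕ, (∀ i, k i ≤ n i) → ∀ i : Fin r, ∀ t ≤ n i, t ≠ k i →
      (1 - c i t * ∏ j, c j (k j)) ≠ 0 ∧ ∀ j, (1 - c i t / c j (k j)) ≠ 0)
    (hden2 : ∀ k : Fin r → ℕ, (∀ i, k i ≤ n i) → ∀ i j : Fin r, i < j →
      (1 - c i (k i) / c j (k j)) ≠ 0) :
    ∑ k ∈ Fintype.piFinset (fun i => Finset.Iic (n i)),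
      ((∏ t ∈ Finset.Icc 1 ((∑ i, n i) - 1),
          ((1 - a t * ∏ j, c j (k j)) * ∏ j, (1 - a t / c j (k j)))) /
        (∏ i, ∏ t ∈ (Finset.Iic (n i)).erase (k i),
          ((1 - c i t * ∏ j, c j (k j)) * ∏ j, (1 - c i t / c j (k j)))) *
        (∏ i, ∏ j ∈ Finset.Ioi i, (1 - c i (k i) / c j (k j))⁻¹) *
        ∏ j, (c j (k j) ^ (j.val + 1))⁻¹) = 0 :=
  Ar_vanishing_trig_general r n hn a c hc hden1 hden2
end
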